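/- Let k be a field of characteristic p > 2 and let B be the quotient of the free algebra k⟨a,b⟩ by the ideal generated by a^p, b^p, and ba - ab - (1/2)a². Then the monomials a^i b^j for 0 ≤ i,j ≤ p-1 span B as a k-vector space; in particular dim_k B ≤ p². -/
import Mathlib

noncomputable section

variable (k : Type*) [Field k]

def aF : FreeAlgebra k (Fin 2) := FreeAlgebra.ι k 0

def bF : FreeAlgebra k (Fin 2) := FreeAlgebra.ι k 1

/-- The relations `a^p = 0`, `b^p = 0`, `ba - ab - (1/2)a² = 0`. -/
def relB (p : ℕ) : FreeAlgebra k (Fin 2) → FreeAlgebra k (Fin 2) → Prop :=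
  fun x y => y = 0 ∧
    (x = (aF k) ^ p ∨ x = (bF k) ^ p ∨
      x = bF k * aF k - aF k * bF k - ((2 : k)⁻¹) • (aF k) ^ 2)

/-- The algebra `B = k⟨a,b⟩/⟨a^p, b^p, ba - ab - (1/2)a²⟩`. -/
abbrev B (p : ℕ) := RingQuot (relB k p)

def aB (p : ℕ) : B k p := RingQuot.mkAlgHom k (relB k p) (aF k)

def bB (p : ℕ) : B k p := RingQuot.mkAlgHom k (relB k p) (bF k)

lemma aB_pow_p (p : ℕ) : (aB k p) ^ p = 0 := by
  have : RingQuot.mkAlgHom k (relB k p) ((aF k) ^ p) = RingQuot.mkAlgHom k (relB k p) 0 :=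
    RingQuot.mkAlgHom_rel k ⟨rfl, Or.inl rfl⟩
  simpa [aB, map_pow] using this

lemma bB_pow_p (p : ℕ) : (bB k p) ^ p = 0 := by
  have : RingQuot.mkAlgHom k (relB k p) ((bF k) ^ p) = RingQuot.mkAlgHom k (relB k p) 0 :=
    RingQuot.mkAlgHom_rel k ⟨rfl, Or.inr (Or.inl rfl)⟩
  simpa [bB, map_pow] using this

lemma comm_rel (p : ℕ) :
    bB k p * aB k p = aB k p * bB k p + ((2 : k)⁻¹) • (aB k p) ^ 2 := by
  have : RingQuot.mkAlgHom k (relB k p)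
      (bF k * aF k - aF k * bF k - ((2 : k)⁻¹) • (aF k) ^ 2) =
      RingQuot.mkAlgHom k (relB k p) 0 :=
    RingQuot.mkAlgHom_rel k ⟨rfl, Or.inr (Or.inr rfl)⟩
  simp only [map_sub, map_mul, map_smul, map_pow, map_zero, sub_eq_zero, sub_eq_iff_eq_add'] at this
  simpa [aB, bB] using this

lemma b_mul_aB_pow (p : ℕ) (i : ℕ) :
    bB k p * (aB k p) ^ i =
      (aB k p) ^ i * bB k p + ((i : k) * (2 : k)⁻¹) • (aB k p) ^ (i + 1) := by
  induction i with
  | zero => simp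
  | succ n ih =>
    have h := comm_rel k p
    have e : bB k p * (aB k p) ^ (n + 1) =
        (aB k p) ^ (n + 1) * bB k p + ((2 : k)⁻¹ + (n : k) * (2 : k)⁻¹) • (aB k p) ^ (n + 2) := by
      rw [pow_succ, ← mul_assoc, ih, add_mul, smul_mul_assoc, mul_assoc, ← pow_succ, h,
        mul_add, ← mul_assoc, ← pow_succ, mul_smul_comm, ← pow_add, add_assoc, ← add_smul]
    rw [e]
    congr 1
    congr 1
    push_cast
    ring

theorem monomials_span (p : ℕ) [Fact p.Prime] (hp : 2 < p) [CharP k p] :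
    Submodule.span k
      {x : B k p | ∃ i j : ℕ, i ≤ p - 1 ∧ j ≤ p - 1 ∧ x = (aB k p) ^ i * (bB k p) ^ j} = ⊤
    ∧ Module.rank k (B k p) ≤ (p ^ 2 : ℕ) := by
  set M := {x : B k p | ∃ i j : ℕ, i ≤ p - 1 ∧ j ≤ p - 1 ∧ x = (aB k p) ^ i * (bB k p) ^ j}
    with hM
  set S := Submodule.span k M with hS
  have hp0 : 0 < p := lt_trans (by norm_num) hp
  have hmem : ∀ i j : ℕ, i ≤ p - 1 → j ≤ p - 1 → (aB k p) ^ i * (bB k p) ^ j ∈ S := by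
    intro i j hi hj
    exact Submodule.subset_span ⟨i, j, hi, hj, rfl⟩
  -- general membership for all i j
  have hmem' : ∀ i j : ℕ, (aB k p) ^ i * (bB k p) ^ j ∈ S := by
    intro i j
    by_cases hi : i ≤ p - 1
    · by_cases hj : j ≤ p - 1
      · exact hmem i j hi hj
      · have : (bB k p) ^ j = 0 := by
          have : p ≤ j := by omega
          calc (bB k p) ^ j = (bB k p) ^ p * (bB k p) ^ (j - p) := by
                rw [← pow_add]; congr 1; omega
            _ = 0 := by rw [bB_pow_p]; simp
        rw [this, mul_zero]; exact Submodule.zero_mem S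
    · have : (aB k p) ^ i = 0 := by
        have : p ≤ i := by omega
        calc (aB k p) ^ i = (aB k p) ^ p * (aB k p) ^ (i - p) := by
              rw [← pow_add]; congr 1; omega
          _ = 0 := by rw [aB_pow_p]; simp
      rw [this, zero_mul]; exact Submodule.zero_mem S
  have ha_mul : ∀ s ∈ S, aB k p * s ∈ S := by
    intro s hs
    refine Submodule.span_induction ?_ ?_ ?_ ?_ hs
    · rintro x ⟨i, j, hi, hj, rfl⟩
      rw [← mul_assoc, ← pow_succ']
      exact hmem' _ _
    · simp
    · intro x y _ _ hx hy; rw [mul_add]; exact Submodule.add_mem S hx hy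
    · intro c x _ hx; rw [mul_smul_comm]; exact Submodule.smul_mem S c hx
  have hb_mul : ∀ s ∈ S, bB k p * s ∈ S := by
    intro s hs
    refine Submodule.span_induction ?_ ?_ ?_ ?_ hs
    · rintro x ⟨i, j, hi, hj, rfl⟩
      rw [← mul_assoc, b_mul_aB_pow, add_mul, smul_mul_assoc, mul_assoc, ← pow_succ']
      exact Submodule.add_mem S (hmem' _ _) (Submodule.smul_mem S _ (hmem' _ _))
    · simp
    · intro x y _ _ hx hy; rw [mul_add]; exact Submodule.add_mem S hx hy
    · intro c x _ hx; rw [mul_smul_comm]; exact Submodule.smul_mem S c hx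
  have hone : (1 : B k p) ∈ S := by
    have := hmem 0 0 (Nat.zero_le _) (Nat.zero_le _)
    simpa using this
  have htop : S = ⊤ := by
    rw [Submodule.eq_top_iff']
    intro x
    obtain ⟨y, rfl⟩ := RingQuot.mkAlgHom_surjective k (relB k p) x
    have key : ∀ y : FreeAlgebra k (Fin 2), ∀ s ∈ S,
        RingQuot.mkAlgHom k (relB k p) y * s ∈ S := by
      intro y
      induction y using FreeAlgebra.induction with
      | grade0 r =>
          intro s hs
          rw [AlgHom.commutes, Algebra.algebraMap_eq_smul_one, smul_mul_assoc, one_mul]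
          exact Submodule.smul_mem S r hs
      | grade1 x =>
          intro s hs
          fin_cases x
          · exact ha_mul s hs
          · exact hb_mul s hs
      | mul x y hx hy =>
          intro s hs
          rw [map_mul, mul_assoc]
          exact hx _ (hy s hs)
      | add x y hx hy =>
          intro s hs
          rw [map_add, add_mul]
          exact Submodule.add_mem S (hx s hs) (hy s hs)
    simpa using key y 1 hone
  refine ⟨htop, ?_⟩
  -- rank bound
  have himg : M ⊆ (fun ij : Fin p × Fin p => (aB k p) ^ (ij.1 : ℕ) * (bB k p) ^ (ij.2 : ℕ)) ''
      Set.univ := by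
    rintro x ⟨i, j, hi, hj, rfl⟩
    exact ⟨(⟨i, by omega⟩, ⟨j, by omega⟩), trivial, rfl⟩
  have h1 : Module.rank k (B k p) ≤ Cardinal.mk M := by
    have := rank_span_le (R := k) M
    rw [← hS, htop] at this
    simpa [rank_top] using this
  refine h1.trans ?_
  calc Cardinal.mk M
      ≤ Cardinal.mk ((fun ij : Fin p × Fin p =>
          (aB k p) ^ (ij.1 : ℕ) * (bB k p) ^ (ij.2 : ℕ)) '' Set.univ) :=
        Cardinal.mk_le_mk_of_subset himg
    _ ≤ Cardinal.lift.{u_1} (Cardinal.mk (Set.univ : Set (Fin p × Fin p))) := by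
        have h := Cardinal.mk_image_le_lift (f := fun ij : Fin p × Fin p =>
          (aB k p) ^ (ij.1 : ℕ) * (bB k p) ^ (ij.2 : ℕ)) (s := Set.univ)
        rwa [Cardinal.lift_uzero] at h
    _ ≤ (p ^ 2 : ℕ) := by
        rw [Cardinal.mk_univ, Cardinal.mk_fintype]
        simp [pow_two]
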